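/- arXiv:2003.00602 — 5 statements merged into one kernel-verified Lean document; each statement's English description precedes it below -/
import Mathlib

section
/- Sequential composition: if M₁ is ε₁-differentially private and M₂ is ε₂-differentially private (with M₂ possibly depending on the output of M₁), then the composed mechanism releasing both outputs is (ε₁ + ε₂)-differentially private. -/
/-- `ε`-differential privacy for mechanisms with discrete output distributions:
for all neighboring datasets and every set of outcomes `S`,
`Pr(M(A) ∈ S) ≤ e^ε · Pr(M(B) ∈ S)`. -/
def IsDP {D Ω : Type*} (N : D → D → Prop) (ε : ℝ) (M : D → PMF Ω) : Prop :=
  ∀ A B, N A B → ∀ S : Set Ω,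
    (M A).toOuterMeasure S ≤ ENNReal.ofReal (Real.exp ε) * (M B).toOuterMeasure S

/-- Sequential (adaptive) composition: if `M₁` is `ε₁`-DP and, for every possible output
`ω₁` of `M₁`, the mechanism `M₂ ω₁` is `ε₂`-DP, then the composed mechanism releasing
both outputs is `(ε₁ + ε₂)`-DP. -/
theorem sequential_composition {D Ω₁ Ω₂ : Type*} (N : D → D → Prop) (ε₁ ε₂ : ℝ)
    (M₁ : D → PMF Ω₁) (M₂ : Ω₁ → D → PMF Ω₂)
    (h₁ : IsDP N ε₁ M₁) (h₂ : ∀ ω₁, IsDP N ε₂ (M₂ ω₁)) :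
    IsDP N (ε₁ + ε₂)
      (fun A => (M₁ A).bind (fun ω₁ => (M₂ ω₁ A).map (fun ω₂ => (ω₁, ω₂)))) := by
  classical
  intro A B hN S
  have hpt₁ : ∀ a, M₁ A a ≤ ENNReal.ofReal (Real.exp ε₁) * M₁ B a := by
    intro a
    simpa [PMF.toOuterMeasure_apply_singleton] using h₁ A B hN {a}
  have hpt₂ : ∀ a b, M₂ a A b ≤ ENNReal.ofReal (Real.exp ε₂) * M₂ a B b := by
    intro a b
    simpa [PMF.toOuterMeasure_apply_singleton] using h₂ a A B hN {b}
  have happly : ∀ (C : D) (x : Ω₁ × Ω₂),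
      ((M₁ C).bind (fun ω₁ => (M₂ ω₁ C).map (fun ω₂ => (ω₁, ω₂)))) x
        = M₁ C x.1 * M₂ x.1 C x.2 := by
    rintro C ⟨a, b⟩
    rw [PMF.bind_apply]
    have hsum : ∀ ω₁, M₁ C ω₁ * ((M₂ ω₁ C).map (fun ω₂ => (ω₁, ω₂))) (a, b)
        = if ω₁ = a then M₁ C a * M₂ a C b else 0 := by
      intro ω₁
      by_cases h : ω₁ = a
      · subst h
        simp only [if_pos rfl]
        congr 1
        rw [PMF.map_apply, tsum_eq_single b]
        · simp
        · intro b' hb'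
          simp [Prod.ext_iff, Ne.symm hb']
      · simp [PMF.map_apply, Prod.ext_iff, Ne.symm h, h]
    simp only [hsum]
    exact tsum_ite_eq a _
  have key : ∀ x : Ω₁ × Ω₂,
      ((M₁ A).bind (fun ω₁ => (M₂ ω₁ A).map (fun ω₂ => (ω₁, ω₂)))) x
        ≤ ENNReal.ofReal (Real.exp (ε₁ + ε₂)) *
          ((M₁ B).bind (fun ω₁ => (M₂ ω₁ B).map (fun ω₂ => (ω₁, ω₂)))) x := by
    intro x
    rw [happly A, happly B, Real.exp_add, ENNReal.ofReal_mul (Real.exp_nonneg _)]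
    calc M₁ A x.1 * M₂ x.1 A x.2
        ≤ (ENNReal.ofReal (Real.exp ε₁) * M₁ B x.1) *
          (ENNReal.ofReal (Real.exp ε₂) * M₂ x.1 B x.2) :=
          mul_le_mul' (hpt₁ _) (hpt₂ _ _)
      _ = ENNReal.ofReal (Real.exp ε₁) * ENNReal.ofReal (Real.exp ε₂) *
          (M₁ B x.1 * M₂ x.1 B x.2) := by ring
  rw [PMF.toOuterMeasure_apply, PMF.toOuterMeasure_apply]
  calc (∑' x, S.indicator (fun x =>
          ((M₁ A).bind (fun ω₁ => (M₂ ω₁ A).map (fun ω₂ => (ω₁, ω₂)))) x) x)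
      ≤ ∑' x, S.indicator (fun x => ENNReal.ofReal (Real.exp (ε₁ + ε₂)) *
          ((M₁ B).bind (fun ω₁ => (M₂ ω₁ B).map (fun ω₂ => (ω₁, ω₂)))) x) x :=
        ENNReal.tsum_le_tsum (fun x => Set.indicator_le_indicator (key x))
    _ = ENNReal.ofReal (Real.exp (ε₁ + ε₂)) * ∑' x, S.indicator (fun x =>
          ((M₁ B).bind (fun ω₁ => (M₂ ω₁ B).map (fun ω₂ => (ω₁, ω₂)))) x) x := by
        rw [← ENNReal.tsum_mul_left]
        congr 1
        ext x
        rw [Set.indicator_apply, Set.indicator_apply]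
        split <;> simp
end

section
/- The Laplace mechanism is ε-differentially private: for a function f: D → ℝ^m with ℓ₁-sensitivity Δ = sup over neighboring datasets A, B of ‖f(A) − f(B)‖₁, the mechanism M(X) = f(X) + (Y₁, …, Y_m) with Y_i i.i.d. Laplace(Δ/ε) satisfies ε-DP. -/
open MeasureTheory

lemma map_add_withDensity_apply {m : ℕ} (c : Fin m → ℝ) (g : (Fin m → ℝ) → ENNReal)
    (S : Set (Fin m → ℝ)) (hS : MeasurableSet S) :
    Measure.map (fun y => c + y) (volume.withDensity g) S = ∫⁻ x in S, g (x - c) := by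
  rw [Measure.map_apply (measurable_const_add c) hS,
    withDensity_apply _ (hS.preimage (measurable_const_add c))]
  have := (measurePreserving_add_left (volume : Measure (Fin m → ℝ)) c).setLIntegral_comp_preimage_emb
    (MeasurableEquiv.addLeft c).measurableEmbedding (fun x => g (x - c)) S
  simp only [add_sub_cancel_left] at this
  exact this

/-- The Laplace mechanism on ℝ^m: for `f : D → ℝ^m` with ℓ₁-sensitivity at most `Δ`
over neighboring datasets, adding i.i.d. `Laplace(Δ/ε)` noise to each coordinate
(i.e. mapping the product Laplace noise measure, with density
`∏ i (ε/(2Δ)) exp(-(ε/Δ)|y i|)` w.r.t. Lebesgue measure, by `y ↦ f X + y`)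
is `ε`-differentially private. -/
theorem laplace_mechanism_dp {D : Type*} {m : ℕ} (N : D → D → Prop) (ε Δ : ℝ)
    (hε : 0 < ε) (hΔ : 0 < Δ) (f : D → (Fin m → ℝ))
    (hsens : ∀ A B, N A B → ∑ i, |f A i - f B i| ≤ Δ) :
    ∀ A B, N A B → ∀ S : Set (Fin m → ℝ), MeasurableSet S →
      (Measure.map (fun y => f A + y)
          (volume.withDensity
            (fun y => ENNReal.ofReal (∏ i, ε / (2 * Δ) * Real.exp (-(ε / Δ) * |y i|))))) S
        ≤ ENNReal.ofReal (Real.exp ε) *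
          (Measure.map (fun y => f B + y)
            (volume.withDensity
              (fun y => ENNReal.ofReal (∏ i, ε / (2 * Δ) * Real.exp (-(ε / Δ) * |y i|))))) S := by
  intro A B hN S hS
  set g : (Fin m → ℝ) → ENNReal :=
    fun y => ENNReal.ofReal (∏ i, ε / (2 * Δ) * Real.exp (-(ε / Δ) * |y i|)) with hg
  rw [map_add_withDensity_apply (f A) g S hS, map_add_withDensity_apply (f B) g S hS,
    ← lintegral_const_mul' _ _ ENNReal.ofReal_ne_top]
  apply setLIntegral_mono_ae (by fun_prop) (Filter.Eventually.of_forall ?_)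
  intro x _
  -- pointwise density inequality
  have hprod : ∀ c : Fin m → ℝ, ∏ i, ε / (2 * Δ) * Real.exp (-(ε / Δ) * |(x - c) i|)
      = (ε / (2 * Δ)) ^ m * Real.exp (∑ i, -(ε / Δ) * |x i - c i|) := by
    intro c
    rw [Finset.prod_mul_distrib, Finset.prod_const, Real.exp_sum]
    simp [Pi.sub_apply]
  rw [hg]
  simp only
  rw [hprod, hprod, ← ENNReal.ofReal_mul (Real.exp_nonneg ε)]
  · apply ENNReal.ofReal_le_ofReal
    rw [show Real.exp ε * ((ε / (2 * Δ)) ^ m * Real.exp (∑ i, -(ε / Δ) * |x i - f B i|))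
        = (ε / (2 * Δ)) ^ m * (Real.exp ε * Real.exp (∑ i, -(ε / Δ) * |x i - f B i|)) by ring,
      ← Real.exp_add]
    apply mul_le_mul_of_nonneg_left _ (by positivity)
    apply Real.exp_le_exp.2
    have hsum : ∑ i, |x i - f B i| ≤ ∑ i, |x i - f A i| + Δ := by
      have h1 : ∑ i, |x i - f B i| ≤ ∑ i, (|x i - f A i| + |f A i - f B i|) := by
        apply Finset.sum_le_sum
        intro i _
        have : x i - f B i = (x i - f A i) + (f A i - f B i) := by ring
        rw [this]; exact abs_add_le _ _
      rw [Finset.sum_add_distrib] at h1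
      linarith [hsens A B hN]
    have hεΔ : 0 < ε / Δ := div_pos hε hΔ
    have : ∑ i, -(ε / Δ) * |x i - f A i| = -(ε / Δ) * ∑ i, |x i - f A i| := by
      rw [Finset.mul_sum]
    rw [this, show ∑ i, -(ε / Δ) * |x i - f B i| = -(ε / Δ) * ∑ i, |x i - f B i| by
      rw [Finset.mul_sum]]
    have := mul_le_mul_of_nonneg_left hsum hεΔ.le
    have hd : ε / Δ * Δ = ε := div_mul_cancel₀ ε hΔ.ne'
    nlinarith
end

section
/- The exponential mechanism is ε-differentially private: given a utility function q: X × Y → ℝ with sensitivity Δq = sup_{D,D' neighbors, y} |q(D,y) − q(D',y)|, the mechanism that outputs y ∈ Y (finite) with probability proportional to exp(ε·q(X,y)/(2Δq)) satisfies ε-differential privacy. -/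
/-- The exponential mechanism is `ε`-differentially private: with a finite candidate set
`Y` and utility `q` of sensitivity at most `Δ` (over neighboring datasets), the mechanism
that outputs `y` with probability proportional to `exp(ε q(X,y)/(2Δ))` changes each
output probability by at most a multiplicative factor `e^ε` between neighbors. -/
theorem exponential_mechanism_dp {D Y : Type*} [Fintype Y] [Nonempty Y]
    (N : D → D → Prop) (ε Δ : ℝ) (hε : 0 ≤ ε) (hΔ : 0 < Δ)
    (q : D → Y → ℝ)
    (hsens : ∀ A B y, N A B → |q A y - q B y| ≤ Δ) :
    ∀ A B, N A B → ∀ y : Y,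
      Real.exp (ε * q A y / (2 * Δ)) / (∑ y', Real.exp (ε * q A y' / (2 * Δ)))
        ≤ Real.exp ε *
          (Real.exp (ε * q B y / (2 * Δ)) / (∑ y', Real.exp (ε * q B y' / (2 * Δ)))) := by
  intro A B hN y
  have hSA : 0 < ∑ y', Real.exp (ε * q A y' / (2 * Δ)) :=
    Finset.sum_pos (fun _ _ => Real.exp_pos _) Finset.univ_nonempty
  have hSB : 0 < ∑ y', Real.exp (ε * q B y' / (2 * Δ)) :=
    Finset.sum_pos (fun _ _ => Real.exp_pos _) Finset.univ_nonempty
  have hnum : ∀ z : Y,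
      Real.exp (ε * q A z / (2 * Δ)) ≤ Real.exp (ε / 2) * Real.exp (ε * q B z / (2 * Δ)) := by
    intro z
    rw [← Real.exp_add]
    apply Real.exp_le_exp.2
    have h1 : q A z - q B z ≤ Δ := (abs_le.1 (hsens A B z hN)).2
    have : ε * q A z / (2 * Δ) - ε * q B z / (2 * Δ) ≤ ε / 2 := by
      rw [div_sub_div_same, ← mul_sub, div_le_div_iff₀ (by linarith) two_pos]
      nlinarith [mul_le_mul_of_nonneg_left h1 hε]
    linarith
  have hden : ∀ z : Y,
      Real.exp (ε * q B z / (2 * Δ)) ≤ Real.exp (ε / 2) * Real.exp (ε * q A z / (2 * Δ)) := by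
    intro z
    rw [← Real.exp_add]
    apply Real.exp_le_exp.2
    have h1 : -Δ ≤ q A z - q B z := (abs_le.1 (hsens A B z hN)).1
    have : ε * q B z / (2 * Δ) - ε * q A z / (2 * Δ) ≤ ε / 2 := by
      rw [div_sub_div_same, ← mul_sub, div_le_div_iff₀ (by linarith) two_pos]
      nlinarith [mul_le_mul_of_nonneg_left h1 hε]
    linarith
  have hS : (∑ y', Real.exp (ε * q B y' / (2 * Δ)))
      ≤ Real.exp (ε / 2) * ∑ y', Real.exp (ε * q A y' / (2 * Δ)) := by
    rw [Finset.mul_sum]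
    exact Finset.sum_le_sum fun z _ => hden z
  have hinv : (∑ y', Real.exp (ε * q A y' / (2 * Δ)))⁻¹
      ≤ Real.exp (ε / 2) * (∑ y', Real.exp (ε * q B y' / (2 * Δ)))⁻¹ := by
    rw [inv_eq_one_div, inv_eq_one_div, mul_one_div, div_le_div_iff₀ hSA hSB]
    simpa using hS
  calc Real.exp (ε * q A y / (2 * Δ)) / (∑ y', Real.exp (ε * q A y' / (2 * Δ)))
      = Real.exp (ε * q A y / (2 * Δ)) * (∑ y', Real.exp (ε * q A y' / (2 * Δ)))⁻¹ := by
        rw [div_eq_mul_inv]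
    _ ≤ (Real.exp (ε / 2) * Real.exp (ε * q B y / (2 * Δ))) *
        (Real.exp (ε / 2) * (∑ y', Real.exp (ε * q B y' / (2 * Δ)))⁻¹) :=
        mul_le_mul (hnum y) hinv (inv_nonneg.2 hSA.le)
          (by positivity)
    _ = Real.exp ε *
        (Real.exp (ε * q B y / (2 * Δ)) / (∑ y', Real.exp (ε * q B y' / (2 * Δ)))) := by
        rw [div_eq_mul_inv, mul_mul_mul_comm, ← Real.exp_add]; rw [show ε * 2⁻¹ + ε * 2⁻¹ = ε by ring, ← div_eq_mul_inv]
end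

section
/- Gumbel-max trick: if Y_i = q_i + G_i where G_i are i.i.d. Gumbel random variables with scale parameter b (density (1/b)exp(−(y/b + e^{−y/b}))), then Pr(argmax_i Y_i = j) = exp(q_j/b) / Σ_i exp(q_i/b). -/
/-!
Conditionally on `G j = t`, index `j` wins iff `G i < t - (q i - q j)` for every `i ≠ j`, which
has probability `∏ exp (-exp (-(t - (q i - q j)) / b)) = exp (-S * exp (-t / b))` with
`S = ∑_{i ≠ j} exp ((q i - q j) / b)`. Since `exp (-G j / b)` is a standard exponential
variable, averaging over `t` gives `1 / (1 + S)`, the softmax weight of `j`.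
-/

open MeasureTheory ProbabilityTheory Real

/-- The Gumbel distribution with scale `b`, with density `(1/b) exp(-(y/b + e^{-y/b}))`. -/
noncomputable def gumbelMeasure (b : ℝ) : Measure ℝ :=
  volume.withDensity fun y => ENNReal.ofReal ((1 / b) * exp (-(y / b + exp (-(y / b)))))

open Filter Set Topology

theorem integrableOn_Iic_deriv_of_nonneg' {g g' : ℝ → ℝ} {a l : ℝ}
    (hderiv : ∀ x ∈ Iic a, HasDerivAt g (g' x) x) (g'pos : ∀ x ∈ Iio a, 0 ≤ g' x)
    (hg : Tendsto g atBot (𝓝 l)) : IntegrableOn g' (Iic a) := by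
  have hderiv_neg : ∀ x ∈ Ici (-a), HasDerivAt (fun x ↦ g (-x)) (-g' (-x)) x := fun x _ ↦ by
    simpa [Function.comp_def] using (hderiv (-x) (by grind)).scomp x (hasDerivAt_neg' x)
  have hint := integrableOn_Ioi_deriv_of_nonpos' hderiv_neg
    (fun x hx ↦ neg_nonpos.2 (g'pos (-x) (by grind))) (hg.comp tendsto_neg_atTop_atBot)
  rw [integrableOn_Iic_iff_integrableOn_Iio,
    ← (Measure.measurePreserving_neg volume).integrableOn_comp_preimage
      (Homeomorph.neg ℝ).measurableEmbedding]
  simpa [Function.comp_def] using hint.neg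

theorem integrable_deriv_of_nonneg {g g' : ℝ → ℝ} {l m : ℝ}
    (hderiv : ∀ x, HasDerivAt g (g' x) x) (g'pos : ∀ x, 0 ≤ g' x)
    (hbot : Tendsto g atBot (𝓝 l)) (htop : Tendsto g atTop (𝓝 m)) : Integrable g' := by
  rw [← integrableOn_univ, ← Iic_union_Ioi (a := 0)]
  exact (integrableOn_Iic_deriv_of_nonneg' (fun x _ ↦ hderiv x) (fun x _ ↦ g'pos x) hbot).union
    (integrableOn_Ioi_deriv_of_nonneg' (fun x _ ↦ hderiv x) (fun x _ ↦ g'pos x) htop)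

/-- For `A > 0`, `A * gumbelKernel A b` is the density of the Gumbel law of scale `b` shifted
by `b log A`; `gumbelKernel 1 b` is the density of `gumbelMeasure b`. -/
noncomputable def gumbelKernel (A b t : ℝ) : ℝ :=
  1 / b * exp (-(t / b)) * exp (-(A * exp (-(t / b))))

section gumbelKernel

variable {A b : ℝ}

lemma gumbelKernel_nonneg (hb : 0 ≤ b) (A t : ℝ) : 0 ≤ gumbelKernel A b t := by
  unfold gumbelKernel
  positivity

lemma hasDerivAt_exp_neg_mul_exp (hA : A ≠ 0) (hb : b ≠ 0) (t : ℝ) :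
    HasDerivAt (fun t ↦ exp (-(A * exp (-(t / b)))) / A) (gumbelKernel A b t) t := by
  have := ((((hasDerivAt_id t).div_const b).neg.exp.const_mul A).neg.exp).div_const A
  refine this.congr_deriv ?_
  simp only [gumbelKernel, Pi.neg_apply, id]
  field_simp

lemma tendsto_exp_neg_div_atTop (hb : 0 < b) :
    Tendsto (fun t ↦ exp (-(t / b))) atTop (𝓝 0) :=
  tendsto_exp_atBot.comp (tendsto_neg_atTop_atBot.comp (tendsto_id.atTop_div_const hb))

lemma tendsto_exp_neg_div_atBot (hb : 0 < b) :
    Tendsto (fun t ↦ exp (-(t / b))) atBot atTop :=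
  tendsto_exp_atTop.comp (tendsto_neg_atBot_atTop.comp (tendsto_id.atBot_div_const hb))

lemma tendsto_exp_neg_mul_exp_atTop (hb : 0 < b) :
    Tendsto (fun t ↦ exp (-(A * exp (-(t / b)))) / A) atTop (𝓝 (1 / A)) := by
  have hcont : Continuous fun u ↦ exp (-(A * u)) / A := by fun_prop
  simpa [Function.comp_def] using (hcont.tendsto 0).comp (tendsto_exp_neg_div_atTop hb)

lemma tendsto_exp_neg_mul_exp_atBot (hA : 0 < A) (hb : 0 < b) :
    Tendsto (fun t ↦ exp (-(A * exp (-(t / b)))) / A) atBot (𝓝 0) := by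
  simpa using (tendsto_exp_atBot.comp (tendsto_neg_atTop_atBot.comp
    ((tendsto_exp_neg_div_atBot hb).const_mul_atTop hA))).div_const A

lemma integrable_gumbelKernel (hA : 0 < A) (hb : 0 < b) : Integrable (gumbelKernel A b) :=
  integrable_deriv_of_nonneg (hasDerivAt_exp_neg_mul_exp hA.ne' hb.ne')
    (gumbelKernel_nonneg hb.le A) (tendsto_exp_neg_mul_exp_atBot hA hb)
    (tendsto_exp_neg_mul_exp_atTop hb)

lemma integral_gumbelKernel (hA : 0 < A) (hb : 0 < b) : ∫ t, gumbelKernel A b t = 1 / A := by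
  simpa using integral_of_hasDerivAt_of_tendsto (hasDerivAt_exp_neg_mul_exp hA.ne' hb.ne')
    (integrable_gumbelKernel hA hb) (tendsto_exp_neg_mul_exp_atBot hA hb)
    (tendsto_exp_neg_mul_exp_atTop hb)

lemma setIntegral_Iic_gumbelKernel (hA : 0 < A) (hb : 0 < b) (a : ℝ) :
    ∫ t in Iic a, gumbelKernel A b t = exp (-(A * exp (-(a / b)))) / A := by
  simpa using integral_Iic_of_hasDerivAt_of_tendsto'
    (fun x _ ↦ hasDerivAt_exp_neg_mul_exp hA.ne' hb.ne' x)
    (integrable_gumbelKernel hA hb).integrableOn (tendsto_exp_neg_mul_exp_atBot hA hb)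

lemma lintegral_ofReal_gumbelKernel (hA : 0 < A) (hb : 0 < b) :
    ∫⁻ t, ENNReal.ofReal (gumbelKernel A b t) = ENNReal.ofReal (1 / A) := by
  rw [← ofReal_integral_eq_lintegral_ofReal (integrable_gumbelKernel hA hb)
    (.of_forall (gumbelKernel_nonneg hb.le A)), integral_gumbelKernel hA hb]

end gumbelKernel

section gumbelMeasure

variable {b : ℝ}

lemma gumbelMeasure_eq_withDensity (b : ℝ) :
    gumbelMeasure b = volume.withDensity fun t ↦ ENNReal.ofReal (gumbelKernel 1 b t) := by
  simp only [gumbelMeasure, gumbelKernel, neg_add, exp_add, one_mul, mul_assoc]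

lemma isProbabilityMeasure_gumbelMeasure (hb : 0 < b) :
    IsProbabilityMeasure (gumbelMeasure b) := by
  constructor
  rw [gumbelMeasure_eq_withDensity, withDensity_apply _ MeasurableSet.univ, Measure.restrict_univ,
    lintegral_ofReal_gumbelKernel one_pos hb, div_one, ENNReal.ofReal_one]

lemma gumbelMeasure_Iio (hb : 0 < b) (a : ℝ) :
    gumbelMeasure b (Iio a) = ENNReal.ofReal (exp (-exp (-(a / b)))) := by
  rw [gumbelMeasure_eq_withDensity, withDensity_apply _ measurableSet_Iio,
    Measure.restrict_congr_set Iio_ae_eq_Iic,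
    ← ofReal_integral_eq_lintegral_ofReal (integrable_gumbelKernel one_pos hb).integrableOn
      (.of_forall (gumbelKernel_nonneg hb.le 1)),
    setIntegral_Iic_gumbelKernel one_pos hb, one_mul, div_one]

/-- Since `exp (-(G / b))` is exponentially distributed for `G ∼ gumbelMeasure b`, this is the
Laplace transform of the exponential law. -/
lemma lintegral_exp_neg_mul_exp_gumbelMeasure (hb : 0 < b) {S : ℝ} (hS : 0 ≤ S) :
    ∫⁻ t, ENNReal.ofReal (exp (-(S * exp (-(t / b))))) ∂gumbelMeasure b
      = ENNReal.ofReal (1 / (1 + S)) := by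
  have hmul (t : ℝ) : ENNReal.ofReal (gumbelKernel 1 b t)
      * ENNReal.ofReal (exp (-(S * exp (-(t / b)))))
      = ENNReal.ofReal (gumbelKernel (1 + S) b t) := by
    rw [← ENNReal.ofReal_mul (gumbelKernel_nonneg hb.le 1 t), gumbelKernel, gumbelKernel,
      mul_assoc, ← exp_add]
    ring_nf
  rw [gumbelMeasure_eq_withDensity, lintegral_withDensity_eq_lintegral_mul _
    (by unfold gumbelKernel; fun_prop) (by fun_prop)]
  simp only [Pi.mul_apply, hmul]
  exact lintegral_ofReal_gumbelKernel (by linarith) hb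

end gumbelMeasure

lemma measurableSet_forall_ne_add_lt {ι : Type*} [Countable ι] (c : ι → ℝ) (j : ι) :
    MeasurableSet {x : ι → ℝ | ∀ i, i ≠ j → c i + x i < c j + x j} := by
  simp only [ofPred_forall]
  exact .iInter fun i ↦ .iInter fun _ ↦ measurableSet_lt (by fun_prop) (by fun_prop)

/-- Conditioning on the coordinate `x j`: Fubini along `Fin.succAbove j`. -/
lemma measure_pi_forall_ne_add_lt {m : ℕ} (μ : Measure ℝ) [SigmaFinite μ]
    (c : Fin (m + 1) → ℝ) (j : Fin (m + 1)) :
    Measure.pi (fun _ ↦ μ) {x | ∀ i, i ≠ j → c i + x i < c j + x j}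
      = ∫⁻ t, ∏ k, μ (Iio (t - (c (j.succAbove k) - c j))) ∂μ := by
  set S : Set (ℝ × (Fin m → ℝ)) := {p | ∀ k, c (j.succAbove k) + p.2 k < c j + p.1}
  have hS : MeasurableSet S := by
    simp only [S, ofPred_forall]
    exact .iInter fun k ↦ measurableSet_lt (by fun_prop) (by fun_prop)
  have hpre : {x | ∀ i, i ≠ j → c i + x i < c j + x j}
      = MeasurableEquiv.piFinSuccAbove (fun _ ↦ ℝ) j ⁻¹' S := by
    ext x
    simp [S, Fin.forall_iff_succAbove j, Fin.succAbove_ne, Fin.removeNth]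
  have hslice (t : ℝ) :
      Prod.mk t ⁻¹' S = univ.pi fun k ↦ Iio (t - (c (j.succAbove k) - c j)) := by
    ext y
    simp only [S, mem_preimage, mem_ofPred_eq, mem_univ_pi, mem_Iio]
    exact forall_congr' fun k ↦ by constructor <;> intro h <;> linarith
  rw [hpre, (measurePreserving_piFinSuccAbove (fun _ ↦ μ) j).measure_preimage
    hS.nullMeasurableSet, Measure.prod_apply hS]
  simp only [hslice, Measure.pi_pi]

lemma prod_gumbelMeasure_Iio_sub {ι : Type*} [Fintype ι] {b : ℝ} (hb : 0 < b) (d : ι → ℝ)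
    (t : ℝ) : ∏ k, gumbelMeasure b (Iio (t - d k))
      = ENNReal.ofReal (exp (-((∑ k, exp (d k / b)) * exp (-(t / b))))) := by
  simp_rw [gumbelMeasure_Iio hb]
  rw [← ENNReal.ofReal_prod_of_nonneg fun k _ ↦ (exp_pos _).le, ← exp_sum, Finset.sum_mul,
    ← Finset.sum_neg_distrib]
  congr 3 with k
  rw [← exp_add]
  ring_nf

lemma exp_div_sum_exp_eq_one_div_one_add {m : ℕ} (q : Fin (m + 1) → ℝ) (b : ℝ)
    (j : Fin (m + 1)) : exp (q j / b) / ∑ i, exp (q i / b)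
      = 1 / (1 + ∑ k, exp ((q (j.succAbove k) - q j) / b)) := by
  simp_rw [Fin.sum_univ_succAbove _ j, sub_div, exp_sub, ← Finset.sum_div]
  field_simp

theorem gumbel_max_trick_general {Ω : Type*} [MeasurableSpace Ω] (P : Measure Ω)
    {n : ℕ} (q : Fin n → ℝ) (b : ℝ) (hb : 0 < b)
    (G : Fin n → Ω → ℝ)
    (hindep : iIndepFun G P)
    (hdist : ∀ i, Measure.map (G i) P = gumbelMeasure b) (j : Fin n) :
    P {ω | ∀ i, i ≠ j → q i + G i ω < q j + G j ω}
      = ENNReal.ofReal (exp (q j / b) / ∑ i, exp (q i / b)) := by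
  obtain ⟨m, rfl⟩ : ∃ m, n = m + 1 := Nat.exists_eq_add_one_of_ne_zero j.pos.ne'
  have := isProbabilityMeasure_gumbelMeasure hb
  have hG (i : Fin (m + 1)) : AEMeasurable (G i) P :=
    .of_map_ne_zero (by rw [hdist]; exact IsProbabilityMeasure.ne_zero _)
  have hlaw : P.map (fun ω i ↦ G i ω) = Measure.pi fun _ ↦ gumbelMeasure b := by
    simp_rw [hindep.map_fun_eq_pi_map hG, hdist]
  change P ((fun ω i ↦ G i ω) ⁻¹' {x | ∀ i, i ≠ j → q i + x i < q j + x j}) = _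
  rw [← Measure.map_apply_of_aemeasurable (aemeasurable_pi_lambda _ hG)
      (measurableSet_forall_ne_add_lt q j), hlaw, measure_pi_forall_ne_add_lt]
  simp_rw [prod_gumbelMeasure_Iio_sub hb]
  rw [lintegral_exp_neg_mul_exp_gumbelMeasure hb (by positivity),
    exp_div_sum_exp_eq_one_div_one_add]

/-- Gumbel-max trick: if `Y i = q i + G i` with `G i` i.i.d. `Gumbel(b)`, then the
probability that `Y j` is the (a.s. unique) maximum is `exp(q j / b) / ∑ i exp(q i / b)`. -/
theorem gumbel_max_trick {Ω : Type*} [MeasurableSpace Ω] (P : Measure Ω)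
    [IsProbabilityMeasure P] {n : ℕ} (q : Fin n → ℝ) (b : ℝ) (hb : 0 < b)
    (G : Fin n → Ω → ℝ) (hmeas : ∀ i, Measurable (G i))
    (hindep : iIndepFun G P)
    (hdist : ∀ i, Measure.map (G i) P = gumbelMeasure b) (j : Fin n) :
    P {ω | ∀ i, i ≠ j → q i + G i ω < q j + G j ω}
      = ENNReal.ofReal (exp (q j / b) / ∑ i, exp (q i / b)) :=
  gumbel_max_trick_general P q b hb G hindep hdist j
end

section
/- Pollard's quantization theorem (discrete version): let P be a probability distribution on a compact set Ω ⊆ ℝ^d and let m₁,…,m_k minimize the k-means objective E_{x∼P}[min_j ‖x − m_j‖²]. Then the discrete distribution supported on {m₁,…,m_k} with weights given by the P-masses of the corresponding Voronoi cells minimizes the 2-Wasserstein distance to P among all distributions supported on at most k points. -/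
open MeasureTheory ENNReal

/-- Squared 2-Wasserstein distance between two measures, defined as the infimum of
`∫ ‖x - y‖²` over all couplings. -/
noncomputable def W2sq {E : Type*} [MeasurableSpace E] [EMetricSpace E]
    (μ ν : Measure E) : ℝ≥0∞ :=
  ⨅ (γ : Measure (E × E)) (_ : γ.map Prod.fst = μ ∧ γ.map Prod.snd = ν),
    ∫⁻ p, edist p.1 p.2 ^ 2 ∂γ

/-- The `k`-means objective of centers `m` with respect to a distribution `P`:
`E_{x∼P}[min_j ‖x - m j‖²]`. -/
noncomputable def kmeansLoss {E : Type*} [MeasurableSpace E] [EMetricSpace E]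
    {k : ℕ} (P : Measure E) (m : Fin k → E) : ℝ≥0∞ :=
  ∫⁻ x, ⨅ j, edist x (m j) ^ 2 ∂P

/-! Pollard's argument: the nearest-center map `x ↦ m (T x)` gives a coupling of `P` with its
image of cost at most the `k`-means loss of `m`, while any coupling of `P` with a measure `ν`
carried by at most `k` points `m'` costs at least the `k`-means loss of `m'`, since each `x`
is sent to one of the `m' j`. Optimality of `m` closes the gap. -/

theorem Finset.exists_fin_range_supset_of_card_le {E : Type*} [Nonempty E] {k : ℕ}
    {s : Finset E} (hsk : s.card ≤ k) : ∃ m : Fin k → E, ↑s ⊆ Set.range m := by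
  classical
  refine ⟨fun j => if h : (j : ℕ) < s.card then s.equivFin.symm ⟨j, h⟩
    else Classical.arbitrary E, fun y hy => ⟨Fin.castLE hsk (s.equivFin ⟨y, hy⟩), ?_⟩⟩
  simp

section Quantization

variable {E : Type*} [MeasurableSpace E] [EMetricSpace E]

theorem W2sq_map_le_lintegral [OpensMeasurableSpace E] [SecondCountableTopology E]
    {μ : Measure E} {f : E → E} (hf : Measurable f) :
    W2sq μ (μ.map f) ≤ ∫⁻ x, edist x (f x) ^ 2 ∂μ := by
  have hgraph : Measurable fun x => (x, f x) := measurable_id.prodMk hf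
  have hcoupling : (μ.map fun x => (x, f x)).map Prod.fst = μ ∧
      (μ.map fun x => (x, f x)).map Prod.snd = μ.map f := by
    rw [Measure.map_map measurable_fst hgraph, Measure.map_map measurable_snd hgraph]
    exact ⟨Measure.map_id, rfl⟩
  exact (iInf₂_le (μ.map fun x => (x, f x)) hcoupling).trans_eq <|
    lintegral_map (measurable_edist.pow_const 2) hgraph

theorem W2sq_map_le_kmeansLoss [OpensMeasurableSpace E] [SecondCountableTopology E]
    {k : ℕ} {P : Measure E} {m : Fin k → E} {T : E → Fin k} (hT : Measurable T)
    (hTnear : ∀ x j, edist x (m (T x)) ≤ edist x (m j)) :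
    W2sq P (P.map fun x => m (T x)) ≤ kmeansLoss P m :=
  (W2sq_map_le_lintegral ((measurable_of_countable m).comp hT)).trans <|
    lintegral_mono fun x => le_iInf fun j => by gcongr; exact hTnear x j

theorem kmeansLoss_le_W2sq_of_ae_mem_range [OpensMeasurableSpace E] {k : ℕ}
    {P ν : Measure E} {m : Fin k → E}
    (hν : ∀ᵐ y ∂ν, y ∈ Set.range m) : kmeansLoss P m ≤ W2sq P ν := by
  refine le_iInf₂ fun γ ⟨hγP, hγν⟩ => ?_
  have hloss : Measurable fun x => ⨅ j, edist x (m j) ^ 2 :=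
    .iInf fun j => measurable_edist_left.pow_const 2
  have hcenter : ∀ᵐ p ∂γ, p.2 ∈ Set.range m :=
    ae_of_ae_map measurable_snd.aemeasurable (hγν ▸ hν)
  calc kmeansLoss P m = ∫⁻ p, ⨅ j, edist p.1 (m j) ^ 2 ∂γ := by
        rw [kmeansLoss, ← hγP, lintegral_map hloss measurable_fst]
    _ ≤ ∫⁻ p, edist p.1 p.2 ^ 2 ∂γ := by
        refine lintegral_mono_ae (hcenter.mono ?_)
        rintro p ⟨j, hj⟩
        exact (iInf_le _ j).trans_eq (by rw [hj])

end Quantization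

theorem pollard_quantization_general {d k : ℕ}
    (P : Measure (EuclideanSpace ℝ (Fin d)))
    (m : Fin k → EuclideanSpace ℝ (Fin d))
    (hopt : ∀ m' : Fin k → EuclideanSpace ℝ (Fin d), kmeansLoss P m ≤ kmeansLoss P m')
    (T : EuclideanSpace ℝ (Fin d) → Fin k) (hT : Measurable T)
    (hTnear : ∀ x j, dist x (m (T x)) ≤ dist x (m j)) :
    ∀ ν : Measure (EuclideanSpace ℝ (Fin d)), IsProbabilityMeasure ν →
      (∃ s : Finset (EuclideanSpace ℝ (Fin d)), s.card ≤ k ∧ ν (↑s)ᶜ = 0) →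
      W2sq P (P.map fun x => m (T x)) ≤ W2sq P ν := by
  rintro ν - ⟨s, hsk, hνs⟩
  obtain ⟨m', hm'⟩ := Finset.exists_fin_range_supset_of_card_le hsk
  have hν : ∀ᵐ y ∂ν, y ∈ Set.range m' := measure_mono_null (Set.compl_subset_compl.2 hm') hνs
  calc W2sq P (P.map fun x => m (T x)) ≤ kmeansLoss P m :=
        W2sq_map_le_kmeansLoss hT fun x j => by
          simpa only [edist_dist] using ENNReal.ofReal_le_ofReal (hTnear x j)
    _ ≤ kmeansLoss P m' := hopt m'
    _ ≤ W2sq P ν := kmeansLoss_le_W2sq_of_ae_mem_range hν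

/-- Pollard's quantization theorem (discrete version): if `m₁, …, m_k` minimize the
`k`-means objective for a compactly supported distribution `P` on ℝ^d, then the
discrete distribution supported on the centers with weights the `P`-masses of the
Voronoi cells (i.e. the pushforward of `P` under the nearest-center map `x ↦ m (T x)`)
minimizes the 2-Wasserstein distance to `P` among all probability distributions
supported on at most `k` points. -/
theorem pollard_quantization {d k : ℕ} [NeZero k]
    (P : Measure (EuclideanSpace ℝ (Fin d))) [IsProbabilityMeasure P]
    (K : Set (EuclideanSpace ℝ (Fin d))) (hK : IsCompact K) (hPK : P Kᶜ = 0)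
    (m : Fin k → EuclideanSpace ℝ (Fin d))
    (hopt : ∀ m' : Fin k → EuclideanSpace ℝ (Fin d), kmeansLoss P m ≤ kmeansLoss P m')
    (T : EuclideanSpace ℝ (Fin d) → Fin k) (hT : Measurable T)
    (hTnear : ∀ x j, dist x (m (T x)) ≤ dist x (m j)) :
    ∀ ν : Measure (EuclideanSpace ℝ (Fin d)), IsProbabilityMeasure ν →
      (∃ s : Finset (EuclideanSpace ℝ (Fin d)), s.card ≤ k ∧ ν (↑s)ᶜ = 0) →
      W2sq P (P.map fun x => m (T x)) ≤ W2sq P ν :=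
  pollard_quantization_general P m hopt T hT hTnear
end
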